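/- arXiv:1808.05060 — 7 statements merged into one kernel-verified Lean document; each statement's English description precedes it below -/
import Mathlib

section
/- For every group element g, the function θ_g(x,y) := ω(g,x,y)·ω(x,y,(xy)⁻¹gxy)/ω(x,x⁻¹gx,y) satisfies the twisted 2-cocycle relation θ_g(x,y)·θ_g(xy,z) = θ_g(x,yz)·θ_{x⁻¹gx}(y,z) for all x,y,z in G. -/
/-- θ_g(x,y) = ω(g,x,y)·ω(x,y,(xy)⁻¹gxy)/ω(x,x⁻¹gx,y). -/
def theta {G : Type*} [Group G] (ω : G → G → G → ℂˣ) (g x y : G) : ℂˣ :=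
  ω g x y * ω x y ((x * y)⁻¹ * g * (x * y)) / ω x (x⁻¹ * g * x) y

theorem theta_twisted_two_cocycle {G : Type*} [Group G] [Fintype G]
    (ω : G → G → G → ℂˣ)
    (hcoc : ∀ g h k l : G,
      ω g h k * ω g (h * k) l * ω h k l = ω (g * h) k l * ω g h (k * l))
    (hnorm : ∀ g h k : G, g = 1 ∨ h = 1 ∨ k = 1 → ω g h k = 1) :
    ∀ g x y z : G,
      theta ω g x y * theta ω g (x * y) z
        = theta ω g x (y * z) * theta ω (x⁻¹ * g * x) y z := by
  intro g x y z
  have ha1 : (x*(y*z))⁻¹ * g * (x*(y*z)) = (x*y*z)⁻¹ * g * (x*y*z) := by group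
  have ha2 : (y*z)⁻¹ * (x⁻¹*g*x) * (y*z) = (x*y*z)⁻¹ * g * (x*y*z) := by group
  have ha3 : y⁻¹ * (x⁻¹*g*x) * y = (x*y)⁻¹ * g * (x*y) := by group
  have hgx : g * x = x * (x⁻¹*g*x) := by group
  have hzG : ((x*y)⁻¹*g*(x*y)) * z = z * ((x*y*z)⁻¹*g*(x*y*z)) := by group
  have hyG : (x⁻¹*g*x) * y = y * ((x*y)⁻¹*g*(x*y)) := by group
  have e1 := congrArg Units.val (hcoc g x y z)
  have e2 := congrArg Units.val (hcoc x y z ((x*y*z)⁻¹*g*(x*y*z)))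
  have e3 := congrArg Units.val (hcoc x y ((x*y)⁻¹*g*(x*y)) z)
  have e4 := congrArg Units.val (hcoc x (x⁻¹*g*x) y z)
  rw [hgx] at e1
  rw [← hzG] at e2
  rw [← hyG] at e3
  simp only [Units.val_mul] at e1 e2 e3 e4
  rw [Units.ext_iff]
  simp only [theta, ha1, ha2, ha3, Units.val_mul, Units.val_div_eq_div_val]
  rw [div_mul_div_comm, div_mul_div_comm,
    div_eq_div_iff (mul_ne_zero (Units.ne_zero _) (Units.ne_zero _))
      (mul_ne_zero (Units.ne_zero _) (Units.ne_zero _))]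
  refine mul_right_cancel₀ (b :=
    ((ω x y z : ℂ)) * (ω x y (((x*y)⁻¹*g*(x*y)) * z) : ℂ)
      * ((ω x ((x⁻¹*g*x) * y) z : ℂ) * (ω y ((x*y)⁻¹*g*(x*y)) z : ℂ)))
    (by
      exact mul_ne_zero (mul_ne_zero (Units.ne_zero _) (Units.ne_zero _))
        (mul_ne_zero (Units.ne_zero _) (Units.ne_zero _))) ?_
  linear_combination
    ((ω (x*y) z ((x*y*z)⁻¹*g*(x*y*z)) : ℂ) * (ω x y (((x*y)⁻¹*g*(x*y)) * z) : ℂ)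
        * (ω x y ((x*y)⁻¹*g*(x*y)) : ℂ) * (ω x ((x⁻¹*g*x) * y) z : ℂ)
        * (ω y ((x*y)⁻¹*g*(x*y)) z : ℂ)
        * (ω x (x⁻¹*g*x) (y*z) : ℂ) * (ω y ((x*y)⁻¹*g*(x*y)) z : ℂ)) * e1
    - ((ω (x*(x⁻¹*g*x)) y z : ℂ) * (ω g x (y*z) : ℂ)
        * (ω x y ((x*y)⁻¹*g*(x*y)) : ℂ) * (ω x ((x⁻¹*g*x) * y) z : ℂ)
        * (ω y ((x*y)⁻¹*g*(x*y)) z : ℂ)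
        * (ω x (x⁻¹*g*x) (y*z) : ℂ) * (ω y ((x*y)⁻¹*g*(x*y)) z : ℂ)) * e2
    + ((ω (x*(x⁻¹*g*x)) y z : ℂ) * (ω g x (y*z) : ℂ) * (ω x y z : ℂ)
        * (ω x (y*z) ((x*y*z)⁻¹*g*(x*y*z)) : ℂ) * (ω y z ((x*y*z)⁻¹*g*(x*y*z)) : ℂ)
        * (ω x (x⁻¹*g*x) (y*z) : ℂ) * (ω y ((x*y)⁻¹*g*(x*y)) z : ℂ)) * e3
    - ((ω g x (y*z) : ℂ) * (ω x (y*z) ((x*y*z)⁻¹*g*(x*y*z)) : ℂ)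
        * (ω y z ((x*y*z)⁻¹*g*(x*y*z)) : ℂ) * (ω x y z : ℂ)
        * (ω x y (((x*y)⁻¹*g*(x*y)) * z) : ℂ) * (ω (x*y) ((x*y)⁻¹*g*(x*y)) z : ℂ)
        * (ω y ((x*y)⁻¹*g*(x*y)) z : ℂ)) * e4
end

section
/- For every g in G, the restriction of θ_g to the centralizer C(g) = {x ∈ G : xg = gx} is a 2-cocycle on C(g), i.e., θ_g(x,y)·θ_g(xy,z) = θ_g(y,z)·θ_g(x,yz) for all x,y,z ∈ C(g). -/
private lemma conj_eq_self {G : Type*} [Group G] {g x : G} (h : x * g = g * x) :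
    x⁻¹ * g * x = g := by
  rw [mul_assoc, ← h, ← mul_assoc, inv_mul_cancel, one_mul]

/-- The restriction of θ_g to the centralizer of g is a genuine 2-cocycle. -/
theorem theta_two_cocycle_on_centralizer {G : Type*} [Group G] [Fintype G]
    (ω : G → G → G → ℂˣ)
    (hcoc : ∀ g h k l : G,
      ω g h k * ω g (h * k) l * ω h k l = ω (g * h) k l * ω g h (k * l))
    (hnorm : ∀ g h k : G, g = 1 ∨ h = 1 ∨ k = 1 → ω g h k = 1) :
    ∀ g x y z : G, x * g = g * x → y * g = g * y → z * g = g * z →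
      theta ω g x y * theta ω g (x * y) z
        = theta ω g y z * theta ω g x (y * z) := by
  intro g x y z hx hy hz
  have hxy : (x * y) * g = g * (x * y) := by
    rw [mul_assoc, hy, ← mul_assoc, hx, mul_assoc]
  have hyz : (y * z) * g = g * (y * z) := by
    rw [mul_assoc, hz, ← mul_assoc, hy, mul_assoc]
  have hxyz : (x * y * z) * g = g * (x * y * z) := by
    rw [mul_assoc, hz, ← mul_assoc, hxy, mul_assoc]
  have hxyz' : (x * (y * z)) * g = g * (x * (y * z)) := by
    rw [mul_assoc, hyz, ← mul_assoc, hx, mul_assoc]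
  simp only [theta, conj_eq_self hx, conj_eq_self hy, conj_eq_self hz,
    conj_eq_self hxy, conj_eq_self hyz, conj_eq_self hxyz, conj_eq_self hxyz']
  -- the four instances of the 3-cocycle identity
  have e1 := hcoc g x y z
  have e2 := hcoc x g y z
  have e3 := hcoc x y g z
  have e4 := hcoc x y z g
  rw [hx] at e2
  rw [hy] at e3
  rw [hz] at e4
  have E : (ω g x y * ω g (x * y) z * ω x y z) *
        (ω x y g * ω x (g * y) z * ω y g z) *
        ((ω (g * x) y z * ω x g (y * z)) * (ω (x * y) z g * ω x y (g * z)))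
      = (ω (g * x) y z * ω g x (y * z)) * (ω (x * y) g z * ω x y (g * z)) *
        ((ω x g y * ω x (g * y) z * ω g y z) * (ω x y z * ω x (y * z) g * ω y z g)) := by
    rw [e1, e3, ← e2, ← e4]
  rw [div_mul_div_comm, div_mul_div_comm, div_eq_div_iff_mul_eq_mul]
  have key : (ω g x y * ω x y g) *
        (ω g (x * y) z * ω (x * y) z g) * (ω y g z * ω x g (y * z)) *
        (ω x y z * ω x (g * y) z * ω (g * x) y z * ω x y (g * z))
      = (ω g y z * ω y z g) * (ω g x (y * z) * ω x (y * z) g) *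
        (ω x g y * ω (x * y) g z) *
        (ω x y z * ω x (g * y) z * ω (g * x) y z * ω x y (g * z)) := by
    simp only [mul_comm, mul_left_comm, mul_assoc] at E ⊢
    exact E
  exact mul_right_cancel key
end

section
/- The function γ satisfies γ_x(g,h)·γ_x(gh,k)·ω(x⁻¹gx, x⁻¹hx, x⁻¹kx) = γ_x(h,k)·γ_x(g,hk)·ω(g,h,k) for all g,h,k,x in G. -/
def gammaTw {G : Type*} [Group G] (ω : G → G → G → ℂˣ) (x h l : G) : ℂˣ :=
  ω h l x * ω x (x⁻¹ * h * x) (x⁻¹ * l * x) / ω h x (x⁻¹ * l * x)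

theorem gamma_identity {G : Type*} [Group G] [Fintype G]
    (ω : G → G → G → ℂˣ)
    (hcoc : ∀ g h k l : G,
      ω g h k * ω g (h * k) l * ω h k l = ω (g * h) k l * ω g h (k * l))
    (hnorm : ∀ g h k : G, g = 1 ∨ h = 1 ∨ k = 1 → ω g h k = 1) :
    ∀ g h k x : G,
      gammaTw ω x g h * gammaTw ω x (g * h) k
          * ω (x⁻¹ * g * x) (x⁻¹ * h * x) (x⁻¹ * k * x)
        = gammaTw ω x h k * gammaTw ω x g (h * k) * ω g h k := by
  intro g h k x
  have h1 := hcoc g h k x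
  have h2 := hcoc g h x (x⁻¹ * k * x)
  have h3 := hcoc g x (x⁻¹ * h * x) (x⁻¹ * k * x)
  have h4 := hcoc x (x⁻¹ * g * x) (x⁻¹ * h * x) (x⁻¹ * k * x)
  have e1 : x * (x⁻¹ * k * x) = k * x := by group
  have e2 : x * (x⁻¹ * h * x) = h * x := by group
  have e3 : (x⁻¹ * h * x) * (x⁻¹ * k * x) = x⁻¹ * (h * k) * x := by group
  have e4 : x * (x⁻¹ * g * x) = g * x := by group
  have e5 : (x⁻¹ * g * x) * (x⁻¹ * h * x) = x⁻¹ * (g * h) * x := by group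
  rw [e1] at h2
  rw [e2, e3] at h3
  rw [e4, e5, e3] at h4
  simp only [gammaTw]
  refine Units.ext ?_
  have H1 := congrArg (Units.val) h1
  have H2 := congrArg (Units.val) h2
  have H3 := congrArg (Units.val) h3
  have H4 := congrArg (Units.val) h4
  push_cast at H1 H2 H3 H4 ⊢
  have n1 : ((ω g x (x⁻¹ * h * x) : ℂˣ) : ℂ) ≠ 0 := Units.ne_zero _
  have n2 : ((ω (g * h) x (x⁻¹ * k * x) : ℂˣ) : ℂ) ≠ 0 := Units.ne_zero _
  have n3 : ((ω h x (x⁻¹ * k * x) : ℂˣ) : ℂ) ≠ 0 := Units.ne_zero _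
  have n4 : ((ω g x (x⁻¹ * (h * k) * x) : ℂˣ) : ℂ) ≠ 0 := Units.ne_zero _
  field_simp
  linear_combination
    ((ω g h x : ℂˣ) : ℂ) * ((ω (g * h) k x : ℂˣ) : ℂ)
        * ((ω h x (x⁻¹ * k * x) : ℂˣ) : ℂ) * ((ω g x (x⁻¹ * (h * k) * x) : ℂˣ) : ℂ) * H4
    - ((ω g h x : ℂˣ) : ℂ) * ((ω (g * h) k x : ℂˣ) : ℂ)
        * ((ω h x (x⁻¹ * k * x) : ℂˣ) : ℂ) * ((ω x (x⁻¹ * g * x) (x⁻¹ * (h * k) * x) : ℂˣ) : ℂ) * H3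
    + ((ω g x (x⁻¹ * h * x) : ℂˣ) : ℂ) * ((ω (g * h) k x : ℂˣ) : ℂ)
        * ((ω x (x⁻¹ * h * x) (x⁻¹ * k * x) : ℂˣ) : ℂ)
        * ((ω x (x⁻¹ * g * x) (x⁻¹ * (h * k) * x) : ℂˣ) : ℂ) * H2
    - ((ω g x (x⁻¹ * h * x) : ℂˣ) : ℂ) * ((ω (g * h) x (x⁻¹ * k * x) : ℂˣ) : ℂ)
        * ((ω x (x⁻¹ * h * x) (x⁻¹ * k * x) : ℂˣ) : ℂ)
        * ((ω x (x⁻¹ * g * x) (x⁻¹ * (h * k) * x) : ℂˣ) : ℂ) * H1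
end

section
/- If x and g commute, then γ_x(g⁻¹,g) = θ_x(g⁻¹,g). -/
theorem gamma_eq_theta_of_commute {G : Type*} [Group G] [Fintype G]
    (ω : G → G → G → ℂˣ)
    (hcoc : ∀ g h k l : G,
      ω g h k * ω g (h * k) l * ω h k l = ω (g * h) k l * ω g h (k * l))
    (hnorm : ∀ g h k : G, g = 1 ∨ h = 1 ∨ k = 1 → ω g h k = 1) :
    ∀ x g : G, x * g = g * x → gammaTw ω x g⁻¹ g = theta ω x g⁻¹ g := by
  intro x g h
  have hc : Commute x g := h
  have h1 : x⁻¹ * g⁻¹ * x = g⁻¹ := by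
    rw [hc.inv_inv.eq, mul_assoc, inv_mul_cancel, mul_one]
  have h2 : x⁻¹ * g * x = g := by
    rw [(hc.inv_left).eq, mul_assoc, inv_mul_cancel, mul_one]
  have h3 : g⁻¹⁻¹ * x * g⁻¹ = x := by
    rw [inv_inv, h.symm, mul_assoc, mul_inv_cancel, mul_one]
  have h4 : (g⁻¹ * g)⁻¹ * x * (g⁻¹ * g) = x := by simp
  unfold gammaTw theta
  rw [h1, h2, h3, h4, mul_comm (ω g⁻¹ g x)]
end

section
/- The multiplication ∇(δ_g x̄, δ_h ȳ) = [g = xhx⁻¹]·θ_g(x,y)·δ_g (xy)‾ on the vector space with basis {δ_g x̄ : g,x ∈ G} is associative, with unit Σ_g δ_g ē. -/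
open scoped BigOperators

/-- Multiplication of `D^ω G`, written on coefficient functions with respect to the
basis `{δ_g x̄}` (indexed by `G × G`). -/
noncomputable def Dmul {G : Type*} [Group G] [Fintype G] [DecidableEq G]
    (ω : G → G → G → ℂˣ) (a b : G × G → ℂ) : G × G → ℂ :=
  fun p => ∑ x : G, ∑ y : G,
    if p.2 = x * y then a (p.1, x) * b (x⁻¹ * p.1 * x, y) * (theta ω p.1 x y : ℂ)
    else 0

/-- The element `Σ_g δ_g ē`. -/
def Done {G : Type*} [Group G] [DecidableEq G] : G × G → ℂ :=
  fun p => if p.2 = 1 then 1 else 0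

lemma key_field (a1 a2 a3 b1 b2 b3 c1 c2 c3 d1 d2 d3 e f p q : ℂ)
    (ha3 : a3 ≠ 0) (hb3 : b3 ≠ 0) (hc3 : c3 ≠ 0) (hd3 : d3 ≠ 0) (he : e ≠ 0) (hp : p ≠ 0)
    (h1 : a1 * b1 * e = f * d1)
    (h2 : a3 * p * c1 = f * d3)
    (h3 : a2 * p * c3 = b3 * q)
    (h4 : e * d2 * c2 = b2 * q) :
    (a1 * a2 / a3) * (b1 * b2 / b3) = (c1 * c2 / c3) * (d1 * d2 / d3) := by
  rw [div_mul_div_comm, div_mul_div_comm,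
    div_eq_div_iff (mul_ne_zero ha3 hb3) (mul_ne_zero hc3 hd3)]
  apply mul_left_cancel₀ (mul_ne_zero he hp)
  linear_combination (a2*c3*p*b2*d3) * h1 + (f*d1*b2*d3) * h3 - (d1*b3*b2*q) * h2
    - (d1*b3*a3*p*c1) * h4

lemma theta_assoc {G : Type*} [Group G] (ω : G → G → G → ℂˣ)
    (hcoc : ∀ g h k l : G,
      ω g h k * ω g (h * k) l * ω h k l = ω (g * h) k l * ω g h (k * l))
    (g x y z : G) :
    ((theta ω g x y : ℂ) * theta ω g (x * y) z) =
      (theta ω (x⁻¹ * g * x) y z : ℂ) * theta ω g x (y * z) := by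
  have h1 := hcoc g x y z
  have h2 := hcoc x (x⁻¹ * g * x) y z
  have h3 := hcoc x y ((x * y)⁻¹ * g * (x * y)) z
  have h4 := hcoc x y z ((x * y * z)⁻¹ * g * (x * y * z))
  rw [show x * (x⁻¹ * g * x) = g * x from by group] at h2
  rw [show y * ((x * y)⁻¹ * g * (x * y)) = x⁻¹ * g * x * y from by group] at h3
  rw [show z * ((x * y * z)⁻¹ * g * (x * y * z)) = (x * y)⁻¹ * g * (x * y) * z
    from by group] at h4
  simp only [theta]
  rw [show (y * z)⁻¹ * (x⁻¹ * g * x) * (y * z) = (x * y * z)⁻¹ * g * (x * y * z) from by group,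
      show y⁻¹ * (x⁻¹ * g * x) * y = (x * y)⁻¹ * g * (x * y) from by group,
      show (x * (y * z))⁻¹ * g * (x * (y * z)) = (x * y * z)⁻¹ * g * (x * y * z) from by group]
  push_cast
  refine key_field _ _ _ _ _ _ _ _ _ _ _ _
    ((ω x y z : ℂ)) ((ω (g * x) y z : ℂ))
    ((ω x (x⁻¹ * g * x * y) z : ℂ)) ((ω x y ((x * y)⁻¹ * g * (x * y) * z) : ℂ))
    (Units.ne_zero _) (Units.ne_zero _) (Units.ne_zero _) (Units.ne_zero _)
    (Units.ne_zero _) (Units.ne_zero _) ?_ ?_ ?_ ?_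
  · exact_mod_cast h1
  · exact_mod_cast h2
  · exact_mod_cast h3
  · exact_mod_cast h4

lemma collapse_right {G : Type*} [Group G] [Fintype G] [DecidableEq G]
    (s u : G) (F : G → ℂ) :
    (∑ w : G, if s = u * w then F w else 0) = F (u⁻¹ * s) := by
  have h : ∀ w : G, (s = u * w) ↔ (w = u⁻¹ * s) := by
    intro w
    constructor
    · intro h; subst h; group
    · intro h; subst h; group
  simp only [h]
  simp [Finset.sum_ite_eq']

lemma collapse_fst {G : Type*} [Group G] [Fintype G] [DecidableEq G]
    (b : G) (F : G → ℂ) :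
    (∑ u : G, if u = b then F u else 0) = F b := by
  simp [Finset.sum_ite_eq']

lemma theta_one_mid {G : Type*} [Group G] (ω : G → G → G → ℂˣ)
    (hnorm : ∀ g h k : G, g = 1 ∨ h = 1 ∨ k = 1 → ω g h k = 1) (g y : G) :
    theta ω g 1 y = 1 := by
  simp [theta, hnorm g 1 y (Or.inr (Or.inl rfl)), hnorm 1 y _ (Or.inl rfl),
    hnorm 1 _ y (Or.inl rfl)]

lemma theta_one_right {G : Type*} [Group G] (ω : G → G → G → ℂˣ)
    (hnorm : ∀ g h k : G, g = 1 ∨ h = 1 ∨ k = 1 → ω g h k = 1) (g x : G) :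
    theta ω g x 1 = 1 := by
  simp [theta, hnorm g x 1 (Or.inr (Or.inr rfl)), hnorm x 1 _ (Or.inr (Or.inl rfl)),
    hnorm x _ 1 (Or.inr (Or.inr rfl))]

theorem Dmul_assoc_and_unital {G : Type*} [Group G] [Fintype G] [DecidableEq G]
    (ω : G → G → G → ℂˣ)
    (hcoc : ∀ g h k l : G,
      ω g h k * ω g (h * k) l * ω h k l = ω (g * h) k l * ω g h (k * l))
    (hnorm : ∀ g h k : G, g = 1 ∨ h = 1 ∨ k = 1 → ω g h k = 1) :
    (∀ a b c : G × G → ℂ, Dmul ω (Dmul ω a b) c = Dmul ω a (Dmul ω b c)) ∧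
    (∀ a : G × G → ℂ, Dmul ω Done a = a ∧ Dmul ω a Done = a) := by
  constructor
  · intro a b c
    funext p
    obtain ⟨g, t⟩ := p
    simp only [Dmul, collapse_right]
    simp only [Finset.sum_mul, ite_mul, zero_mul]
    rw [Finset.sum_comm]
    refine Finset.sum_congr rfl fun x _ => ?_
    rw [Finset.mul_sum, Finset.sum_mul]
    refine (Fintype.sum_bijective (fun y => x * y) (Group.mulLeft_bijective x) _ _
      fun y => ?_).symm
    rw [show x⁻¹ * (x * y) = y from by group]
    set z := y⁻¹ * (x⁻¹ * t) with hz
    rw [show (x * y)⁻¹ * t = z from by rw [hz]; group,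
        show x⁻¹ * t = y * z from by rw [hz]; group,
        show y⁻¹ * (x⁻¹ * g * x) * y = (x * y)⁻¹ * g * (x * y) from by group]
    have := theta_assoc ω hcoc g x y z
    linear_combination (-(a (g, x) * b (x⁻¹ * g * x, y) *
      c ((x * y)⁻¹ * g * (x * y), z))) * this
  · intro a
    constructor
    · funext p
      obtain ⟨g, t⟩ := p
      simp only [Dmul, Done, collapse_right]
      simp only [ite_mul, one_mul, zero_mul]
      rw [collapse_fst]
      simp [theta_one_mid ω hnorm]
    · funext p
      obtain ⟨g, t⟩ := p
      simp only [Dmul, Done, collapse_right]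
      simp only [inv_mul_eq_one, mul_ite, ite_mul, mul_one, mul_zero, zero_mul]
      rw [collapse_fst]
      simp [theta_one_right ω hnorm]
end

section
/- The algebra D^ω G decomposes as a direct sum of two-sided ideals indexed by the conjugacy classes of G: D^ω G = ⊕_{K ∈ Conj(G)} D^ω(K,G), where D^ω(K,G) is the span of δ_g x̄ with g ∈ K. In particular, (δ_g x̄)(δ_h ȳ) = 0 whenever g and h lie in distinct conjugacy classes. -/
open scoped BigOperators

/-- The basis element `δ_g x̄`. -/
def dl {G : Type*} [Group G] [DecidableEq G] (g x : G) : G × G → ℂ :=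
  fun p => if p = (g, x) then 1 else 0

/-- `D^ω G` decomposes as a direct sum of two-sided ideals indexed by conjugacy
classes: basis elements over non-conjugate group elements multiply to zero, the span
of the basis elements over a single conjugacy class is a two-sided ideal, and every
element decomposes as a sum of components supported on single conjugacy classes. -/
theorem Dmul_conjugacy_class_decomposition
    {G : Type*} [Group G] [Fintype G] [DecidableEq G]
    (ω : G → G → G → ℂˣ)
    (hcoc : ∀ g h k l : G,
      ω g h k * ω g (h * k) l * ω h k l = ω (g * h) k l * ω g h (k * l))
    (hnorm : ∀ g h k : G, g = 1 ∨ h = 1 ∨ k = 1 → ω g h k = 1) :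
    (∀ g x h y : G, ¬ IsConj g h → Dmul ω (dl g x) (dl h y) = 0) ∧
    (∀ (g : G) (a b : G × G → ℂ), (∀ p, a p ≠ 0 → IsConj g p.1) →
      (∀ p, Dmul ω a b p ≠ 0 → IsConj g p.1) ∧
      (∀ p, Dmul ω b a p ≠ 0 → IsConj g p.1)) ∧
    (∀ a : G × G → ℂ, ∃ f : ConjClasses G → (G × G → ℂ),
      (∀ c p, f c p ≠ 0 → ConjClasses.mk p.1 = c) ∧
      a = ∑ c : ConjClasses G, f c) := by
  classical
  refine ⟨?_, ?_, ?_⟩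
  · intro g x h y hne
    funext p
    simp only [Dmul, dl, Pi.zero_apply]
    refine Finset.sum_eq_zero fun x' _ => Finset.sum_eq_zero fun y' _ => ?_
    rcases eq_or_ne (p.1, x') (g, x) with h1 | h1
    · rcases eq_or_ne (x'⁻¹ * p.1 * x', y') (h, y) with h2 | h2
      · exfalso
        apply hne
        obtain ⟨h1a, h1b⟩ := Prod.mk.injEq .. ▸ h1
        obtain ⟨h2a, _⟩ := Prod.mk.injEq .. ▸ h2
        exact isConj_iff.2 ⟨x'⁻¹, by rw [h1a] at h2a; rw [← h2a]; group⟩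
      · simp [h2]
    · simp [h1]
  · intro g a b ha
    constructor
    · intro p hp
      simp only [Dmul] at hp
      obtain ⟨x, -, hx⟩ := Finset.exists_ne_zero_of_sum_ne_zero hp
      obtain ⟨y, -, hy⟩ := Finset.exists_ne_zero_of_sum_ne_zero hx
      by_contra hc
      apply hy
      rcases eq_or_ne (a (p.1, x)) 0 with h0 | h0
      · simp [h0]
      · exact absurd (ha _ h0) hc
    · intro p hp
      simp only [Dmul] at hp
      obtain ⟨x, -, hx⟩ := Finset.exists_ne_zero_of_sum_ne_zero hp
      obtain ⟨y, -, hy⟩ := Finset.exists_ne_zero_of_sum_ne_zero hx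
      by_contra hc
      apply hy
      rcases eq_or_ne (a (x⁻¹ * p.1 * x, y)) 0 with h0 | h0
      · simp [h0]
      · exact absurd ((ha _ h0).trans (isConj_iff.2 ⟨x, by group⟩)) hc
  · intro a
    refine ⟨fun c p => if ConjClasses.mk p.1 = c then a p else 0, ?_, ?_⟩
    · intro c p hp
      by_contra h
      simp [h] at hp
    · funext p
      simp [Finset.sum_apply, Finset.sum_ite_eq]
end

section
/- For a fixed a ∈ G, the subalgebra of D^ω G spanned by {δ_a x̄ : x ∈ C(a)} is isomorphic as an algebra to the twisted group algebra ℂ_{θ_a}[C(a)], whose multiplication is x·y = θ_a(x,y)·(xy). -/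
open scoped BigOperators

noncomputable instance centralizerFintype {G : Type*} [Group G] [Fintype G]
    (a : G) : Fintype ↥(Subgroup.centralizer ({a} : Set G)) :=
  Fintype.ofFinite _

/-- Multiplication of the `θ_a`-twisted group algebra `ℂ_{θ_a}[C(a)]` on coefficient
functions on the centralizer `C(a)`. -/
noncomputable def twistedMul {G : Type*} [Group G] [Fintype G] [DecidableEq G]
    (ω : G → G → G → ℂˣ) (a : G)
    (f g : ↥(Subgroup.centralizer ({a} : Set G)) → ℂ) :
    ↥(Subgroup.centralizer ({a} : Set G)) → ℂ :=
  fun z => ∑ x : ↥(Subgroup.centralizer ({a} : Set G)),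
    ∑ y : ↥(Subgroup.centralizer ({a} : Set G)),
      if z = x * y then (theta ω a (x : G) (y : G) : ℂ) * f x * g y else 0

lemma sum_dite_subgroup {G : Type*} [Group G] [Fintype G] (S : Subgroup G)
    [Fintype S] [DecidablePred (· ∈ S)] (F : S → ℂ) :
    (∑ x : G, if h : x ∈ S then F ⟨x, h⟩ else 0) = ∑ x : S, F x := by
  have h2 : (∑ x : S, F x)
      = ∑ x : S, (fun y => if h : y ∈ S then F ⟨y, h⟩ else 0) (x : G) := by
    refine Finset.sum_congr rfl fun x _ => ?_
    simp [x.2]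
  rw [h2, ← Finset.sum_subtype (Finset.univ.filter (· ∈ S)) (by simp)
      (fun y => if h : y ∈ S then F ⟨y, h⟩ else 0)]
  rw [Finset.sum_filter]
  refine Finset.sum_congr rfl fun x _ => ?_
  by_cases h : x ∈ S <;> simp [h]

lemma conj_eq_of_mem_centralizer {G : Type*} [Group G] {a x : G}
    (hx : x ∈ Subgroup.centralizer ({a} : Set G)) : x⁻¹ * a * x = a := by
  have h1 := hx a (by simp)
  rw [mul_assoc, h1, inv_mul_cancel_left]

/-- The subalgebra of `D^ω G` spanned by `{δ_a x̄ : x ∈ C(a)}` is isomorphic to the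
twisted group algebra `ℂ_{θ_a}[C(a)]`. -/
theorem twisted_group_algebra_iso {G : Type*} [Group G] [Fintype G] [DecidableEq G]
    (ω : G → G → G → ℂˣ)
    (hcoc : ∀ g h k l : G,
      ω g h k * ω g (h * k) l * ω h k l = ω (g * h) k l * ω g h (k * l))
    (hnorm : ∀ g h k : G, g = 1 ∨ h = 1 ∨ k = 1 → ω g h k = 1)
    (a : G) :
    ∃ Φ : (↥(Subgroup.centralizer ({a} : Set G)) → ℂ) → (G × G → ℂ),
      IsLinearMap ℂ Φ ∧ Function.Injective Φ ∧
      (∀ f g, Φ (twistedMul ω a f g) = Dmul ω (Φ f) (Φ g)) ∧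
      Set.range Φ
        = {b : G × G → ℂ |
            ∀ p, b p ≠ 0 → p.1 = a ∧ p.2 ∈ Subgroup.centralizer ({a} : Set G)} := by
  classical
  set C := Subgroup.centralizer ({a} : Set G) with hC
  refine ⟨fun f p => if h : p.1 = a ∧ p.2 ∈ C then f ⟨p.2, h.2⟩ else 0, ?_, ?_, ?_, ?_⟩
  · constructor
    · intro f g; funext p
      by_cases h : p.1 = a ∧ p.2 ∈ C <;> simp [h]
    · intro c f; funext p
      by_cases h : p.1 = a ∧ p.2 ∈ C <;> simp [h]
  · intro f g hfg
    funext z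
    have := congrFun hfg (a, (z : G))
    simpa [z.2] using this
  · intro f g
    funext p
    dsimp only
    by_cases hp1 : p.1 = a
    · by_cases hp2 : p.2 ∈ C
      · rw [dif_pos ⟨hp1, hp2⟩]
        unfold twistedMul Dmul
        rw [← sum_dite_subgroup C (fun x => ∑ y : C,
          if (⟨p.2, hp2⟩ : C) = x * y then (theta ω a (x : G) (y : G) : ℂ) * f x * g y else 0)]
        refine Finset.sum_congr rfl fun x _ => ?_
        beta_reduce
        by_cases hx : x ∈ C
        · rw [dif_pos hx,
            ← sum_dite_subgroup C (fun y =>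
              if (⟨p.2, hp2⟩ : C) = ⟨x, hx⟩ * y then
                (theta ω a x (y : G) : ℂ) * f ⟨x, hx⟩ * g y else 0)]
          refine Finset.sum_congr rfl fun y _ => ?_
          beta_reduce
          have hxc : x⁻¹ * a * x = a := conj_eq_of_mem_centralizer hx
          by_cases hy : y ∈ C
          · rw [dif_pos hy]
            have hcond : ((⟨p.2, hp2⟩ : C) = ⟨x, hx⟩ * ⟨y, hy⟩) ↔ (p.2 = x * y) := by
              rw [Subtype.ext_iff]; rfl
            by_cases hxy : p.2 = x * y
            · rw [if_pos (hcond.mpr hxy)]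
              simp only [hp1, hxc, Prod.fst, Prod.snd, if_pos hxy]
              rw [dif_pos (⟨trivial, hx⟩ : True ∧ x ∈ C),
                dif_pos (⟨trivial, hy⟩ : True ∧ y ∈ C)]
              ring
            · rw [if_neg (fun h => hxy (hcond.mp h)), if_neg hxy]
          · rw [dif_neg hy]
            simp [hp1, hxc, hy]
        · rw [dif_neg hx]
          symm
          refine Finset.sum_eq_zero fun y _ => ?_
          beta_reduce
          simp [hp1, hx]
      · rw [dif_neg (fun h => hp2 h.2)]
        symm
        unfold Dmul
        refine Finset.sum_eq_zero fun x _ => Finset.sum_eq_zero fun y _ => ?_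
        beta_reduce
        by_cases hx : x ∈ C
        · have hxc : x⁻¹ * a * x = a := conj_eq_of_mem_centralizer hx
          by_cases hy : y ∈ C
          · by_cases hxy : p.2 = x * y
            · exact absurd (hxy ▸ mul_mem hx hy) hp2
            · rw [if_neg hxy]
          · simp [hp1, hxc, hy]
        · simp [hp1, hx]
    · rw [dif_neg (fun h => hp1 h.1)]
      symm
      unfold Dmul
      refine Finset.sum_eq_zero fun x _ => Finset.sum_eq_zero fun y _ => ?_
      beta_reduce
      simp [hp1]
  · ext b
    constructor
    · rintro ⟨f, rfl⟩ p hp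
      by_cases h : p.1 = a ∧ p.2 ∈ C
      · exact h
      · exact absurd (dif_neg h) hp
    · intro hb
      refine ⟨fun z => b (a, (z : G)), ?_⟩
      funext p
      dsimp only
      by_cases h : p.1 = a ∧ p.2 ∈ C
      · rw [dif_pos h]
        obtain ⟨h1, _⟩ := h
        rw [← h1]
      · rw [dif_neg h]
        by_contra hne
        exact h (hb p (Ne.symm hne))
end
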